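/- arXiv:2403.14609 — 5 statements merged into one kernel-verified Lean document; each statement's English description precedes it below -/
import Mathlib

section
/- Hadamard–Fischer inequality: for a positive definite matrix A and index sets α, β ⊆ {1,…,n}, det(A(α ∪ β)) · det(A(α ∩ β)) ≤ det(A(α)) · det(A(β)), where A(γ) denotes the principal submatrix of A on rows and columns in γ and det(A(∅)) = 1 by convention. -/
/-- The principal submatrix of `A` on the index set `γ`. -/
def psub {n : ℕ} (A : Matrix (Fin n) (Fin n) ℝ) (γ : Finset (Fin n)) :
    Matrix γ γ ℝ :=
  A.submatrix Subtype.val Subtype.val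

namespace HF

open Matrix

variable {n : ℕ}

/-- Extension of a vector on `γ` by zero. -/
def ext0 (γ : Finset (Fin n)) (x : γ → ℝ) : Fin n → ℝ :=
  fun j => if h : j ∈ γ then x ⟨j, h⟩ else 0

lemma ext0_mem (γ : Finset (Fin n)) (x : γ → ℝ) (j : γ) : ext0 γ x ↑j = x j := by
  simp [ext0, j.2]

lemma ext0_not_mem (γ : Finset (Fin n)) (x : γ → ℝ) {j : Fin n} (h : j ∉ γ) :
    ext0 γ x j = 0 := by simp [ext0, h]

lemma ext0_ne_zero {γ : Finset (Fin n)} {x : γ → ℝ} (hx : x ≠ 0) : ext0 γ x ≠ 0 := by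
  intro h
  apply hx
  funext j
  have := congrFun h (↑j)
  rwa [ext0_mem] at this

lemma sum_restrict (γ : Finset (Fin n)) (F : Fin n → ℝ) (hF : ∀ j ∉ γ, F j = 0) :
    ∑ j, F j = ∑ j : γ, F ↑j := by
  have h1 : ∑ j : γ, F ↑j = ∑ j ∈ γ, F j := by
    rw [Finset.univ_eq_attach]; exact Finset.sum_attach γ F
  rw [h1]
  exact (Finset.sum_subset (Finset.subset_univ γ) fun j _ hj => hF j hj).symm

lemma ext0_dot (γ : Finset (Fin n)) (x : γ → ℝ) (g : Fin n → ℝ) :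
    ext0 γ x ⬝ᵥ g = ∑ j : γ, x j * g ↑j := by
  unfold dotProduct
  rw [sum_restrict γ (fun j => ext0 γ x j * g j)
      (fun j hj => by show ext0 γ x j * g j = 0; rw [ext0_not_mem γ x hj, zero_mul])]
  exact Finset.sum_congr rfl fun j _ => by rw [ext0_mem]

lemma dot_ext0 (γ : Finset (Fin n)) (x : γ → ℝ) (g : Fin n → ℝ) :
    g ⬝ᵥ ext0 γ x = ∑ j : γ, g ↑j * x j := by
  rw [dotProduct_comm, ext0_dot]
  exact Finset.sum_congr rfl fun j _ => mul_comm _ _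

/-- mulVec of the principal submatrix, entrywise. -/
lemma mulVec_psub (A : Matrix (Fin n) (Fin n) ℝ) (γ : Finset (Fin n)) (x : γ → ℝ) (j : γ) :
    (psub A γ *ᵥ x) j = A ↑j ⬝ᵥ ext0 γ x := by
  rw [dot_ext0]
  rfl

/-- Quadratic form restriction. -/
lemma quad_ext0 (A : Matrix (Fin n) (Fin n) ℝ) (γ : Finset (Fin n)) (x : γ → ℝ) :
    ext0 γ x ⬝ᵥ A *ᵥ ext0 γ x = x ⬝ᵥ psub A γ *ᵥ x := by
  rw [ext0_dot]
  unfold dotProduct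
  refine Finset.sum_congr rfl fun j _ => ?_
  rw [mulVec_psub]
  rfl

lemma psub_posDef {A : Matrix (Fin n) (Fin n) ℝ} (hA : A.PosDef) (γ : Finset (Fin n)) :
    (psub A γ).PosDef := by
  rw [posDef_iff_dotProduct_mulVec]
  constructor
  · ext j k
    have := congrFun (congrFun hA.1 ↑j) ↑k
    simpa [psub, Matrix.conjTranspose_apply] using this
  · intro x hx
    have h := hA.dotProduct_mulVec_pos (ext0_ne_zero hx)
    rw [star_trivial] at h ⊢
    rwa [quad_ext0] at h

lemma psub_det_pos {A : Matrix (Fin n) (Fin n) ℝ} (hA : A.PosDef) (γ : Finset (Fin n)) :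
    0 < (psub A γ).det :=
  (psub_posDef hA γ).det_pos

lemma psub_symm {A : Matrix (Fin n) (Fin n) ℝ} (hA : A.PosDef) (γ : Finset (Fin n))
    (j k : γ) : psub A γ j k = psub A γ k j := by
  have := congrFun (congrFun hA.1 ↑k) ↑j
  simpa [psub, Matrix.conjTranspose_apply] using this

section Schur

/-- Symmetry of `A`. -/
lemma Asymm {A : Matrix (Fin n) (Fin n) ℝ} (hA : A.PosDef) (a b : Fin n) :
    A a b = A b a := by
  have := congrFun (congrFun hA.1 b) a
  simpa [Matrix.conjTranspose_apply] using this

def einsertTo (γ : Finset (Fin n)) (i : Fin n)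
    (j : ↥(insert i γ : Finset (Fin n))) : ↥γ ⊕ Unit :=
  if h : (j : Fin n) ∈ γ then Sum.inl ⟨j, h⟩ else Sum.inr ()

def einsertInv (γ : Finset (Fin n)) (i : Fin n) :
    ↥γ ⊕ Unit → ↥(insert i γ : Finset (Fin n))
  | Sum.inl k => ⟨(k : Fin n), Finset.mem_insert_of_mem k.2⟩
  | Sum.inr _ => ⟨i, Finset.mem_insert_self i γ⟩

/-- The equivalence `↥(insert i γ) ≃ ↥γ ⊕ Unit`. -/
def einsert {γ : Finset (Fin n)} {i : Fin n} (hi : i ∉ γ) :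
    ↥(insert i γ : Finset (Fin n)) ≃ ↥γ ⊕ Unit where
  toFun := einsertTo γ i
  invFun := einsertInv γ i
  left_inv := by
    rintro ⟨j, hj⟩
    unfold einsertTo
    by_cases h : j ∈ γ
    · simp [h, einsertInv]
    · rcases Finset.mem_insert.mp hj with rfl | h'
      · simp [h, einsertInv]
      · exact absurd h' h
  right_inv := by
    rintro (⟨k, hk⟩ | ⟨⟩)
    · simp [einsertTo, einsertInv, hk]
    · simp [einsertTo, einsertInv, hi]

/-- The vector `v` : `γ`-column of `A` at `i`. -/
def vcol (A : Matrix (Fin n) (Fin n) ℝ) (γ : Finset (Fin n)) (i : Fin n) : γ → ℝ :=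
  fun j => A ↑j i

/-- The Schur complement scalar. -/
noncomputable def schur (A : Matrix (Fin n) (Fin n) ℝ) (γ : Finset (Fin n)) (i : Fin n) : ℝ :=
  A i i - vcol A γ i ⬝ᵥ (psub A γ)⁻¹ *ᵥ vcol A γ i

lemma psub_transpose {A : Matrix (Fin n) (Fin n) ℝ} (hA : A.PosDef) (γ : Finset (Fin n)) :
    (psub A γ)ᵀ = psub A γ := by
  ext j k
  exact psub_symm hA γ k j

lemma quad_symm {A : Matrix (Fin n) (Fin n) ℝ} (hA : A.PosDef) (γ : Finset (Fin n))
    (a b : γ → ℝ) : a ⬝ᵥ psub A γ *ᵥ b = b ⬝ᵥ psub A γ *ᵥ a := by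
  rw [Matrix.dotProduct_mulVec, ← Matrix.mulVec_transpose, psub_transpose hA,
    dotProduct_comm]

lemma det_insert {A : Matrix (Fin n) (Fin n) ℝ} (hA : A.PosDef) {γ : Finset (Fin n)}
    {i : Fin n} (hi : i ∉ γ) :
    (psub A (insert i γ)).det = (psub A γ).det * schur A γ i := by
  classical
  have hdet : IsUnit (psub A γ).det := isUnit_iff_ne_zero.mpr (psub_det_pos hA γ).ne'
  haveI : Invertible (psub A γ) := (psub A γ).invertibleOfIsUnitDet hdet
  have hre : (psub A (insert i γ)).det
      = ((psub A (insert i γ)).submatrix (einsert hi).symm (einsert hi).symm).det :=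
    (Matrix.det_submatrix_equiv_self _ _).symm
  have hblock : (psub A (insert i γ)).submatrix (einsert hi).symm (einsert hi).symm
      = Matrix.fromBlocks (psub A γ) (Matrix.of fun j _ => A ↑j i) (Matrix.of fun _ k => A i ↑k)
        (Matrix.of fun _ _ => A i i) := by
    ext j k
    rcases j with j | j <;> rcases k with k | k <;> rfl
  rw [hre, hblock, Matrix.det_fromBlocks₁₁]
  congr 1
  rw [Matrix.det_unique, Matrix.sub_apply]
  unfold schur
  congr 1
  rw [invOf_eq_nonsing_inv, Matrix.dotProduct_mulVec]
  simp only [Matrix.mul_apply, Matrix.vecMul, dotProduct, Matrix.of_apply]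
  refine Finset.sum_congr rfl fun k _ => ?_
  congr 1
  refine Finset.sum_congr rfl fun j _ => ?_
  congr 1
  exact Asymm hA i ↑j

/-- Expansion of the quadratic form at `e_i + ext0 γ x`. -/
lemma quad_expand {A : Matrix (Fin n) (Fin n) ℝ} (hA : A.PosDef) {γ : Finset (Fin n)}
    {i : Fin n} (hi : i ∉ γ) (x : γ → ℝ) :
    (Pi.single i 1 + ext0 γ x) ⬝ᵥ A *ᵥ (Pi.single i 1 + ext0 γ x)
      = A i i + 2 * (vcol A γ i ⬝ᵥ x) + x ⬝ᵥ psub A γ *ᵥ x := by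
  rw [Matrix.mulVec_add, dotProduct_add, add_dotProduct, add_dotProduct]
  have h1 : Pi.single i 1 ⬝ᵥ A *ᵥ Pi.single i (1:ℝ) = A i i := by
    simp [Matrix.mulVec_single]
  have h2 : Pi.single i 1 ⬝ᵥ A *ᵥ ext0 γ x = vcol A γ i ⬝ᵥ x := by
    rw [single_dotProduct, one_mul]
    show A i ⬝ᵥ ext0 γ x = _
    rw [dot_ext0]
    refine Finset.sum_congr rfl fun j _ => ?_
    rw [Asymm hA i ↑j]; rfl
  have h3 : ext0 γ x ⬝ᵥ A *ᵥ Pi.single i (1:ℝ) = vcol A γ i ⬝ᵥ x := by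
    rw [Matrix.mulVec_single]
    have hfun : MulOpposite.op (1:ℝ) • A.col i = fun k => A k i := by funext k; simp
    rw [hfun, ext0_dot]
    unfold dotProduct vcol
    exact Finset.sum_congr rfl fun j _ => mul_comm _ _
  have h4 : ext0 γ x ⬝ᵥ A *ᵥ ext0 γ x = x ⬝ᵥ psub A γ *ᵥ x := quad_ext0 A γ x
  rw [h1, h2, h3, h4]; ring

lemma schur_le {A : Matrix (Fin n) (Fin n) ℝ} (hA : A.PosDef) {γ : Finset (Fin n)}
    {i : Fin n} (hi : i ∉ γ) (x : γ → ℝ) :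
    schur A γ i ≤ (Pi.single i 1 + ext0 γ x) ⬝ᵥ A *ᵥ (Pi.single i 1 + ext0 γ x) := by
  classical
  rw [quad_expand hA hi x]
  set P := psub A γ with hP
  set v := vcol A γ i with hv
  have hdet : IsUnit P.det := isUnit_iff_ne_zero.mpr (psub_det_pos hA γ).ne'
  set w := P⁻¹ *ᵥ v with hw
  have hPw : P *ᵥ w = v := by
    rw [hw, Matrix.mulVec_mulVec, Matrix.mul_nonsing_inv _ hdet, Matrix.one_mulVec]
  have hPD : P.PosDef := psub_posDef hA γ
  have hkey : 0 ≤ (x + w) ⬝ᵥ P *ᵥ (x + w) := by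
    have := hPD.posSemidef.dotProduct_mulVec_nonneg (x + w)
    rwa [star_trivial] at this
  have hexp : (x + w) ⬝ᵥ P *ᵥ (x + w)
      = x ⬝ᵥ P *ᵥ x + 2 * (v ⬝ᵥ x) + v ⬝ᵥ P⁻¹ *ᵥ v := by
    rw [Matrix.mulVec_add, dotProduct_add, add_dotProduct, add_dotProduct, hPw]
    have hsymP : w ⬝ᵥ P *ᵥ x = x ⬝ᵥ P *ᵥ w := quad_symm hA γ w x
    rw [hsymP, hPw]
    have h5 : w ⬝ᵥ v = v ⬝ᵥ P⁻¹ *ᵥ v := by rw [hw, dotProduct_comm]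
    have h6 : x ⬝ᵥ v = v ⬝ᵥ x := dotProduct_comm _ _
    rw [h5, h6]; ring
  unfold schur
  rw [← hv, ← hP]
  linarith [hkey, hexp.le, hexp.symm.le]

lemma schur_eq {A : Matrix (Fin n) (Fin n) ℝ} (hA : A.PosDef) {γ : Finset (Fin n)}
    {i : Fin n} (hi : i ∉ γ) : ∃ x : γ → ℝ,
    (Pi.single i 1 + ext0 γ x) ⬝ᵥ A *ᵥ (Pi.single i 1 + ext0 γ x) = schur A γ i := by
  classical
  set P := psub A γ with hP
  set v := vcol A γ i with hv
  have hdet : IsUnit P.det := isUnit_iff_ne_zero.mpr (psub_det_pos hA γ).ne'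
  refine ⟨-(P⁻¹ *ᵥ v), ?_⟩
  rw [quad_expand hA hi]
  set w := P⁻¹ *ᵥ v with hw
  have hPw : P *ᵥ w = v := by
    rw [hw, Matrix.mulVec_mulVec, Matrix.mul_nonsing_inv _ hdet, Matrix.one_mulVec]
  have h1 : v ⬝ᵥ (-w) = -(v ⬝ᵥ w) := by rw [dotProduct_neg]
  have h2 : (-w) ⬝ᵥ P *ᵥ (-w) = w ⬝ᵥ P *ᵥ w := by
    rw [Matrix.mulVec_neg, dotProduct_neg, neg_dotProduct, neg_neg]
  have h3 : w ⬝ᵥ P *ᵥ w = w ⬝ᵥ v := by rw [hPw]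
  have h4 : w ⬝ᵥ v = v ⬝ᵥ w := dotProduct_comm _ _
  unfold schur
  rw [← hv, ← hP, ← hw, h1, h2, h3, h4]
  ring

/-- Monotonicity of the Schur ratio. -/
lemma ratio_le {A : Matrix (Fin n) (Fin n) ℝ} (hA : A.PosDef) {γ δ : Finset (Fin n)}
    {i : Fin n} (hsub : γ ⊆ δ) (hi : i ∉ δ) :
    (psub A (insert i δ)).det * (psub A γ).det
      ≤ (psub A δ).det * (psub A (insert i γ)).det := by
  have hiγ : i ∉ γ := fun h => hi (hsub h)
  rw [det_insert hA hi, det_insert hA hiγ]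
  have hsch : schur A δ i ≤ schur A γ i := by
    obtain ⟨x, hx⟩ := schur_eq hA hiγ
    have hext : ext0 δ (fun k : δ => ext0 γ x ↑k) = ext0 γ x := by
      funext j
      by_cases h : j ∈ δ
      · rw [ext0_mem δ _ ⟨j, h⟩]
      · rw [ext0_not_mem δ _ h, ext0_not_mem γ _ (fun h' => h (hsub h'))]
    have := schur_le hA hi (fun k : δ => ext0 γ x ↑k)
    rw [hext, hx] at this
    exact this
  have h1 : 0 < (psub A γ).det := psub_det_pos hA γ
  have h2 : 0 < (psub A δ).det := psub_det_pos hA δ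
  nlinarith [mul_le_mul_of_nonneg_right (mul_le_mul_of_nonneg_left hsch h2.le) h1.le]

end Schur

lemma main_ind {A : Matrix (Fin n) (Fin n) ℝ} (hA : A.PosDef) (S : Finset (Fin n)) :
    ∀ γ δ : Finset (Fin n), γ ⊆ δ → (∀ i ∈ S, i ∉ δ) →
      (psub A (δ ∪ S)).det * (psub A γ).det
        ≤ (psub A δ).det * (psub A (γ ∪ S)).det := by
  induction S using Finset.induction with
  | empty =>
    intro γ δ hsub _
    rw [Finset.union_empty, Finset.union_empty]
  | @insert i S' hiS' IH =>
    intro γ δ hsub hS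
    have hiδ : i ∉ δ := hS i (Finset.mem_insert_self i S')
    have hS' : ∀ j ∈ S', j ∉ δ := fun j hj => hS j (Finset.mem_insert_of_mem hj)
    have hIH := IH γ δ hsub hS'
    have hiδS : i ∉ δ ∪ S' := by
      rw [Finset.mem_union]; rintro (h | h); exact hiδ h; exact hiS' h
    have hsub' : γ ∪ S' ⊆ δ ∪ S' := Finset.union_subset_union hsub (Finset.Subset.refl _)
    have hr := ratio_le hA hsub' hiδS
    have e1 : δ ∪ insert i S' = insert i (δ ∪ S') := Finset.union_insert i δ S'
    have e2 : γ ∪ insert i S' = insert i (γ ∪ S') := Finset.union_insert i γ S'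
    rw [e1, e2]
    have p1 : 0 < (psub A (δ ∪ S')).det := psub_det_pos hA _
    have p2 : 0 < (psub A (γ ∪ S')).det := psub_det_pos hA _
    have p3 : 0 < (psub A γ).det := psub_det_pos hA _
    have p4 : 0 < (psub A δ).det := psub_det_pos hA _
    have p5 : 0 < (psub A (insert i (δ ∪ S'))).det := psub_det_pos hA _
    have p6 : 0 < (psub A (insert i (γ ∪ S'))).det := psub_det_pos hA _
    nlinarith [mul_le_mul hr hIH (by positivity) (by positivity)]

end HF

theorem stmt3 {n : ℕ} (A : Matrix (Fin n) (Fin n) ℝ) (hA : A.PosDef)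
    (α β : Finset (Fin n)) :
    (psub A (α ∪ β)).det * (psub A (α ∩ β)).det ≤
      (psub A α).det * (psub A β).det := by
  classical
  have h := HF.main_ind hA (α \ β) (α ∩ β) β Finset.inter_subset_right
    (fun i hi => (Finset.mem_sdiff.mp hi).2)
  have e1 : β ∪ α \ β = α ∪ β := by
    rw [Finset.union_sdiff_self_eq_union, Finset.union_comm]
  have e2 : α ∩ β ∪ α \ β = α := by
    rw [Finset.union_comm, Finset.sdiff_union_inter]
  rw [e1, e2] at h
  linarith
end

section
/- Fischer's inequality: if A is positive definite with block form A = [[B, C],[Cᵀ, D]] where B and D are square, then det(A) ≤ det(B) · det(D). -/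
open Matrix

variable {n : Type*} [Fintype n] [DecidableEq n]

lemma myPosDef_of_det_ne_zero {S : Matrix n n ℝ} (hS : S.PosSemidef) (hd : S.det ≠ 0) :
    S.PosDef := by
  refine posDef_iff_dotProduct_mulVec.mpr ⟨hS.1, fun x hx => ?_⟩
  rcases (hS.dotProduct_mulVec_nonneg x).eq_or_lt with h | h
  · exfalso
    apply hx
    have h0 : S *ᵥ x = 0 := (hS.dotProduct_mulVec_zero_iff x).mp h.symm
    have hinj := (Matrix.mulVec_injective_iff_isUnit (A := S)).mpr
      ((Matrix.isUnit_iff_isUnit_det S).2 hd.isUnit)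
    have := hinj (by simpa using h0 : S *ᵥ x = S *ᵥ 0)
    exact this
  · exact h

lemma myOne_le_det_one_add {M : Matrix n n ℝ} (hM : M.PosSemidef) :
    (1 : ℝ) ≤ (1 + M).det := by
  have hMh := hM.1
  have key : (1 : Matrix n n ℝ) + M =
      (hMh.eigenvectorUnitary : Matrix n n ℝ) *
        (1 + diagonal (RCLike.ofReal ∘ hMh.eigenvalues)) *
        (star (hMh.eigenvectorUnitary : Matrix n n ℝ)) := by
    rw [Matrix.mul_add, Matrix.add_mul, Matrix.mul_one,
      (Matrix.mem_unitaryGroup_iff).mp hMh.eigenvectorUnitary.2,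
      ← Unitary.conjStarAlgAut_apply (S := ℝ), ← hMh.spectral_theorem]
  rw [key, det_mul_right_comm, (Matrix.mem_unitaryGroup_iff).mp hMh.eigenvectorUnitary.2,
    Matrix.one_mul]
  have : (1 : Matrix n n ℝ) + diagonal (RCLike.ofReal ∘ hMh.eigenvalues) =
      diagonal (fun i => 1 + hMh.eigenvalues i) := by
    rw [← diagonal_one, diagonal_add]
    congr 1
  rw [this, det_diagonal]
  calc (1:ℝ) = ∏ _i : n, (1:ℝ) := by simp
    _ ≤ ∏ i : n, (1 + hMh.eigenvalues i) :=
      Finset.prod_le_prod (fun i _ => zero_le_one) fun i _ => by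
        linarith [hM.eigenvalues_nonneg i]

lemma myDet_le_det_add {S P : Matrix n n ℝ} (hS : S.PosDef) (hP : P.PosSemidef) :
    S.det ≤ (S + P).det := by
  have hSps := hS.posSemidef
  open scoped MatrixOrder in set R := CFC.sqrt S with hRdef
  have hRps : R.PosSemidef := open scoped MatrixOrder in (CFC.sqrt_nonneg S).posSemidef
  have hRR : R * R = S := open scoped MatrixOrder in CFC.sqrt_mul_sqrt_self S hSps.nonneg
  have hdetR : R.det ≠ 0 := by
    intro h
    have := hS.det_pos
    rw [← hRR, det_mul, h, mul_zero] at this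
    exact lt_irrefl _ this
  haveI : Invertible R := Matrix.invertibleOfIsUnitDet R hdetR.isUnit
  have hRinv : (R⁻¹)ᴴ = R⁻¹ := hRps.1.inv
  have hM : (R⁻¹ * P * R⁻¹).PosSemidef := by
    have := hP.mul_mul_conjTranspose_same R⁻¹
    rwa [hRinv] at this
  have key : S + P = R * (1 + R⁻¹ * P * R⁻¹) * R := by
    rw [Matrix.mul_add, Matrix.mul_one, Matrix.add_mul, hRR]
    congr 1
    rw [← Matrix.mul_assoc, ← Matrix.mul_assoc, Matrix.mul_nonsing_inv R
      (by simpa using hdetR.isUnit), Matrix.one_mul, Matrix.mul_assoc,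
      Matrix.nonsing_inv_mul R (by simpa using hdetR.isUnit), Matrix.mul_one]
  rw [key, det_mul, det_mul, mul_comm R.det, mul_assoc, ← det_mul, hRR]
  nlinarith [myOne_le_det_one_add hM, hS.det_pos]

lemma myDet_nonneg {S : Matrix n n ℝ} (hS : S.PosSemidef) : 0 ≤ S.det := by
  rw [hS.1.det_eq_prod_eigenvalues]
  exact Finset.prod_nonneg fun i _ => by simpa using hS.eigenvalues_nonneg i

lemma myBlockPosDef {m k : ℕ} {B : Matrix (Fin m) (Fin m) ℝ}
    {C : Matrix (Fin m) (Fin k) ℝ} {D : Matrix (Fin k) (Fin k) ℝ}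
    (hA : (Matrix.fromBlocks B C Cᵀ D).PosDef) : B.PosDef ∧ D.PosDef := by
  obtain ⟨hherm, hpos⟩ := posDef_iff_dotProduct_mulVec.mp hA
  rw [isHermitian_fromBlocks_iff] at hherm
  constructor
  · refine posDef_iff_dotProduct_mulVec.mpr ⟨hherm.1, fun x hx => ?_⟩
    have hv : (Sum.elim x 0 : Fin m ⊕ Fin k → ℝ) ≠ 0 := by
      intro h
      exact hx (funext fun i => congrFun h (Sum.inl i))
    have := hpos hv
    simpa [fromBlocks_mulVec, dotProduct, Fintype.sum_sum_type] using this
  · refine posDef_iff_dotProduct_mulVec.mpr ⟨hherm.2.2.2, fun x hx => ?_⟩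
    have hv : (Sum.elim 0 x : Fin m ⊕ Fin k → ℝ) ≠ 0 := by
      intro h
      exact hx (funext fun i => congrFun h (Sum.inr i))
    have := hpos hv
    simpa [fromBlocks_mulVec, dotProduct, Fintype.sum_sum_type] using this

theorem stmt4 {m k : ℕ} (B : Matrix (Fin m) (Fin m) ℝ)
    (C : Matrix (Fin m) (Fin k) ℝ) (D : Matrix (Fin k) (Fin k) ℝ)
    (hA : (Matrix.fromBlocks B C Cᵀ D).PosDef) :
    (Matrix.fromBlocks B C Cᵀ D).det ≤ B.det * D.det := by
  obtain ⟨hB, hD⟩ := myBlockPosDef hA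
  haveI : Invertible B := Matrix.invertibleOfIsUnitDet B hB.det_pos.ne'.isUnit
  have hCt : Cᵀ = Cᴴ := (conjTranspose_eq_transpose_of_trivial C).symm
  have hSchurPsd : (D - Cᴴ * B⁻¹ * C).PosSemidef := by
    rw [← Matrix.PosDef.fromBlocks₁₁ C D hB]
    rw [← hCt]
    exact hA.posSemidef
  have hdet : (Matrix.fromBlocks B C Cᵀ D).det = B.det * (D - Cᴴ * B⁻¹ * C).det := by
    rw [hCt, det_fromBlocks₁₁, invOf_eq_nonsing_inv]
  have hPsd : (Cᴴ * B⁻¹ * C).PosSemidef := hB.inv.posSemidef.conjTranspose_mul_mul_same C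
  have hSchurDet : (D - Cᴴ * B⁻¹ * C).det ≤ D.det := by
    rcases eq_or_ne (D - Cᴴ * B⁻¹ * C).det 0 with h0 | h0
    · rw [h0]; exact hD.det_pos.le
    · have hSchurPd := myPosDef_of_det_ne_zero hSchurPsd h0
      have := myDet_le_det_add hSchurPd hPsd
      simpa using this
  calc (Matrix.fromBlocks B C Cᵀ D).det = B.det * (D - Cᴴ * B⁻¹ * C).det := hdet
    _ ≤ B.det * D.det := by
        nlinarith [hB.det_pos, myDet_nonneg hSchurPsd]
end

section
/- For a positive definite matrix B with i its last index and B = Lᵢ Uᵢ its LU-decomposition (Uᵢ unit upper triangular), the bottom-right entry of B⁻¹ equals the reciprocal of the bottom-right entry of Lᵢ. -/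
open Matrix Finset

theorem stmt9 {m : ℕ} (B L U : Matrix (Fin (m + 1)) (Fin (m + 1)) ℝ)
    (hB : B.PosDef)
    (hL : ∀ i j : Fin (m + 1), i < j → L i j = 0)
    (hU : ∀ i j : Fin (m + 1), j < i → U i j = 0)
    (hUdiag : ∀ i : Fin (m + 1), U i i = 1)
    (hLU : B = L * U) :
    B⁻¹ (Fin.last m) (Fin.last m) = 1 / L (Fin.last m) (Fin.last m) := by
  set l := Fin.last m with hl
  have hUtri : U.BlockTriangular id := fun i j h => hU i j h
  have hLtri : L.BlockTriangular OrderDual.toDual := fun i j h => hL i j h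
  have hUdet : U.det = 1 := by
    rw [Matrix.det_of_upperTriangular hUtri]
    simp [hUdiag]
  have hBdet : IsUnit B.det := isUnit_iff_ne_zero.mpr hB.det_pos.ne'
  have hLdet : IsUnit L.det := by
    have : B.det = L.det * U.det := by rw [hLU, Matrix.det_mul]
    rw [hUdet, mul_one] at this
    rwa [this] at hBdet
  have hUdet' : IsUnit U.det := by rw [hUdet]; exact isUnit_one
  haveI : Invertible L := L.invertibleOfIsUnitDet hLdet
  haveI : Invertible U := U.invertibleOfIsUnitDet hUdet'
  have hUinv : U⁻¹.BlockTriangular id :=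
    Matrix.blockTriangular_inv_of_blockTriangular hUtri
  have hLinv : L⁻¹.BlockTriangular OrderDual.toDual :=
    Matrix.blockTriangular_inv_of_blockTriangular hLtri
  have hUone : U⁻¹ l l = 1 := by
    have h1 : (U * U⁻¹) l l = 1 := by
      rw [Matrix.mul_nonsing_inv U hUdet']; simp
    rw [Matrix.mul_apply] at h1
    rw [Finset.sum_eq_single l (fun k _ hk => ?_) (by simp)] at h1
    · rwa [hUdiag l, one_mul] at h1
    · rcases lt_or_gt_of_ne hk with h | h
      · exact mul_eq_zero_of_left (hU l k h) _
      · exact mul_eq_zero_of_right _ (hUinv h)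
  have hLone : L l l * L⁻¹ l l = 1 := by
    have h1 : (L * L⁻¹) l l = 1 := by
      rw [Matrix.mul_nonsing_inv L hLdet]; simp
    rw [Matrix.mul_apply] at h1
    rwa [Finset.sum_eq_single l (fun k _ hk => ?_) (by simp)] at h1
    rcases lt_or_gt_of_ne hk with h | h
    · exact mul_eq_zero_of_right _ (hLinv h)
    · exact mul_eq_zero_of_left (hL l k h) _
  have hBinv : B⁻¹ = U⁻¹ * L⁻¹ := by rw [hLU, Matrix.mul_inv_rev]
  rw [hBinv, Matrix.mul_apply]
  rw [Finset.sum_eq_single l (fun k _ hk => ?_) (by simp)]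
  · rw [hUone, one_mul]
    exact eq_one_div_of_mul_eq_one_left (by rw [mul_comm]; exact hLone)
  · rcases lt_or_gt_of_ne hk with h | h
    · exact mul_eq_zero_of_left (hUinv h) _
    · exact absurd h (not_lt.mpr (Fin.le_last k))
end

section
/- Let A be positive definite and let E be a lower-triangular sparsity pattern (a set of pairs (i,j) with 1 ≤ j ≤ i ≤ n containing all diagonal pairs (i,i)). Then there exists a unique lower triangular matrix L̂⁻¹ supported on E such that (L̂⁻¹ A)_{i,j} = I_{i,j} for all (i,j) ∈ E; its i-th row restricted to the column indices Eᵢ of row i is the unique solution ℓᵢ of A(Eᵢ) ℓᵢ = bᵢ, where bᵢ is the standard basis vector at position i restricted to Eᵢ. -/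
open Matrix

/-- The column indices of row `i` of the sparsity pattern `E`. -/
def rowSet {n : ℕ} (E : Finset (Fin n × Fin n)) (i : Fin n) : Finset (Fin n) :=
  Finset.univ.filter fun j => (i, j) ∈ E

lemma psub_isHermitian {n : ℕ} {A : Matrix (Fin n) (Fin n) ℝ} (hA : A.IsHermitian)
    (γ : Finset (Fin n)) : (psub A γ).IsHermitian := by
  ext i j
  simpa [psub, Matrix.conjTranspose_apply] using hA.apply i.val j.val

lemma sum_ext {n : ℕ} (γ : Finset (Fin n)) (x : γ → ℝ) (g y : Fin n → ℝ)
    (h1 : ∀ j : γ, y j = x j) (h0 : ∀ j, j ∉ γ → y j = 0) :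
    ∑ j : γ, g j * x j = ∑ j : Fin n, g j * y j := by
  rw [Finset.univ_eq_attach]
  calc ∑ j ∈ γ.attach, g j * x j
      = ∑ j ∈ γ.attach, g (j : Fin n) * y (j : Fin n) :=
        Finset.sum_congr rfl fun j _ => by rw [h1]
    _ = ∑ j ∈ γ, g j * y j := Finset.sum_attach γ (fun j => g j * y j)
    _ = ∑ j : Fin n, g j * y j :=
        Finset.sum_subset (f := fun j => g j * y j) (Finset.subset_univ γ)
          (fun j _ hj => by show g j * y j = 0; rw [h0 j hj, mul_zero])

lemma psub_posDef {n : ℕ} {A : Matrix (Fin n) (Fin n) ℝ} (hA : A.PosDef)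
    (γ : Finset (Fin n)) : (psub A γ).PosDef := by
  classical
  refine Matrix.PosDef.of_dotProduct_mulVec_pos (psub_isHermitian hA.1 γ) fun x hx => ?_
  set y : Fin n → ℝ := fun j => if h : j ∈ γ then x ⟨j, h⟩ else 0 with hy
  have h1 : ∀ j : γ, y j = x j := fun j => by simp [hy, j.2]
  have h0 : ∀ j, j ∉ γ → y j = 0 := fun j hj => by simp [hy, hj]
  have hyne : y ≠ 0 := by
    intro h0'
    apply hx
    funext j
    have := congrFun h0' (j : Fin n)
    rw [h1 j] at this
    exact this
  have key : dotProduct (star x) ((psub A γ) *ᵥ x) = dotProduct (star y) (A *ᵥ y) := by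
    simp only [dotProduct, Matrix.mulVec, star_trivial]
    have inner : ∀ i : Fin n, ∑ j : γ, A i (j : Fin n) * x j = ∑ j : Fin n, A i j * y j :=
      fun i => sum_ext γ x (fun j => A i j) y h1 h0
    calc ∑ i : γ, x i * ∑ j : γ, (psub A γ) i j * x j
        = ∑ i : γ, (∑ j : Fin n, A (i : Fin n) j * y j) * x i := by
          refine Finset.sum_congr rfl fun i _ => ?_
          rw [mul_comm]
          congr 1
          simpa [psub] using inner (i : Fin n)
      _ = ∑ i : Fin n, (∑ j : Fin n, A i j * y j) * y i :=
          sum_ext γ x (fun i => ∑ j : Fin n, A i j * y j) y h1 h0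
      _ = ∑ i : Fin n, y i * ∑ j : Fin n, A i j * y j := by
          exact Finset.sum_congr rfl fun i _ => mul_comm _ _
  rw [key]
  exact hA.dotProduct_mulVec_pos hyne

theorem stmt12 {n : ℕ} (A : Matrix (Fin n) (Fin n) ℝ) (hA : A.PosDef)
    (E : Finset (Fin n × Fin n))
    (hlow : ∀ p ∈ E, p.2 ≤ p.1) (hdiag : ∀ i : Fin n, (i, i) ∈ E) :
    (∃! M : Matrix (Fin n) (Fin n) ℝ,
      (∀ i j : Fin n, i < j → M i j = 0) ∧
      (∀ i j : Fin n, (i, j) ∉ E → M i j = 0) ∧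
      (∀ p ∈ E, (M * A) p.1 p.2 = (1 : Matrix (Fin n) (Fin n) ℝ) p.1 p.2)) ∧
    (∀ M : Matrix (Fin n) (Fin n) ℝ,
      (∀ i j : Fin n, i < j → M i j = 0) →
      (∀ i j : Fin n, (i, j) ∉ E → M i j = 0) →
      (∀ p ∈ E, (M * A) p.1 p.2 = (1 : Matrix (Fin n) (Fin n) ℝ) p.1 p.2) →
      ∀ i : Fin n,
        (∃! ℓ : rowSet E i → ℝ,
          (psub A (rowSet E i)).mulVec ℓ =
            fun j : rowSet E i => if (j : Fin n) = i then (1 : ℝ) else 0) ∧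
        (psub A (rowSet E i)).mulVec (fun j : rowSet E i => M i (j : Fin n)) =
          fun j : rowSet E i => if (j : Fin n) = i then (1 : ℝ) else 0) := by
  classical
  have hsym : ∀ a b : Fin n, A a b = A b a := fun a b => by
    simpa using hA.1.apply b a
  have hmem : ∀ i j : Fin n, j ∈ rowSet E i ↔ (i, j) ∈ E := fun i j => by
    simp [rowSet]
  have hdet : ∀ i : Fin n, IsUnit (psub A (rowSet E i)).det := fun i =>
    isUnit_iff_ne_zero.2 (psub_posDef hA (rowSet E i)).det_pos.ne'
  have hinj : ∀ i : Fin n, Function.Injective (psub A (rowSet E i)).mulVec := fun i =>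
    Matrix.mulVec_injective_iff_isUnit.2 ((Matrix.isUnit_iff_isUnit_det _).2 (hdet i))
  -- key computational identity
  have hkey : ∀ (M : Matrix (Fin n) (Fin n) ℝ),
      (∀ i j : Fin n, (i, j) ∉ E → M i j = 0) →
      ∀ (i j : Fin n) (hj : j ∈ rowSet E i),
      ((psub A (rowSet E i)) *ᵥ fun k : rowSet E i => M i (k : Fin n)) ⟨j, hj⟩
        = (M * A) i j := by
    intro M hsupp i j hj
    simp only [Matrix.mulVec, dotProduct, Matrix.mul_apply, psub, Matrix.submatrix_apply]
    rw [sum_ext (rowSet E i) (fun k : rowSet E i => M i (k : Fin n)) (fun k => A j k)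
      (fun k => M i k) (fun k => rfl)
      (fun k hk => hsupp i k (fun hE' => hk ((hmem i k).2 hE')))]
    exact Finset.sum_congr rfl fun k _ => by rw [hsym j k, mul_comm]
  -- equivalence between the matrix condition and the row linear systems
  have hiff : ∀ (M : Matrix (Fin n) (Fin n) ℝ),
      (∀ i j : Fin n, (i, j) ∉ E → M i j = 0) →
      ((∀ p ∈ E, (M * A) p.1 p.2 = (1 : Matrix (Fin n) (Fin n) ℝ) p.1 p.2) ↔
        ∀ i : Fin n, ((psub A (rowSet E i)) *ᵥ fun k : rowSet E i => M i (k : Fin n))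
          = fun j : rowSet E i => if (j : Fin n) = i then (1 : ℝ) else 0) := by
    intro M hsupp
    constructor
    · intro h i
      funext j
      have hj : (j : Fin n) ∈ rowSet E i := j.2
      have heq : ((psub A (rowSet E i)) *ᵥ fun k : rowSet E i => M i (k : Fin n)) j
          = (M * A) i (j : Fin n) := by
        have := hkey M hsupp i (j : Fin n) hj
        simpa using this
      rw [heq, h (i, (j : Fin n)) ((hmem i (j : Fin n)).1 hj)]
      simp [Matrix.one_apply, eq_comm]
    · intro h p hp
      obtain ⟨i, j⟩ := p
      have hj : j ∈ rowSet E i := (hmem i j).2 hp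
      have := congrFun (h i) ⟨j, hj⟩
      rw [hkey M hsupp i j hj] at this
      rw [this]
      simp [Matrix.one_apply, eq_comm]
  -- the candidate matrix
  set M₀ : Matrix (Fin n) (Fin n) ℝ := fun i j =>
    if h : j ∈ rowSet E i then
      ((psub A (rowSet E i))⁻¹ *ᵥ
        fun k : rowSet E i => if (k : Fin n) = i then (1 : ℝ) else 0) ⟨j, h⟩
    else 0 with hM₀
  have hM₀supp : ∀ i j : Fin n, (i, j) ∉ E → M₀ i j = 0 := by
    intro i j hij
    have : j ∉ rowSet E i := fun h => hij ((hmem i j).1 h)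
    simp [hM₀, this]
  have hM₀row : ∀ i : Fin n,
      ((psub A (rowSet E i)) *ᵥ fun k : rowSet E i => M₀ i (k : Fin n))
        = fun j : rowSet E i => if (j : Fin n) = i then (1 : ℝ) else 0 := by
    intro i
    have hr : (fun k : rowSet E i => M₀ i (k : Fin n))
        = ((psub A (rowSet E i))⁻¹ *ᵥ
          fun k : rowSet E i => if (k : Fin n) = i then (1 : ℝ) else 0) := by
      funext k
      simp [hM₀, k.2]
    rw [hr, Matrix.mulVec_mulVec, Matrix.mul_nonsing_inv _ (hdet i), Matrix.one_mulVec]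
  have hM₀prod : ∀ p ∈ E, (M₀ * A) p.1 p.2 = (1 : Matrix (Fin n) (Fin n) ℝ) p.1 p.2 :=
    (hiff M₀ hM₀supp).2 hM₀row
  constructor
  · refine ⟨M₀, ⟨?_, hM₀supp, hM₀prod⟩, ?_⟩
    · intro i j hij
      exact hM₀supp i j (fun hE' => absurd (hlow _ hE') (not_le.2 hij))
    · rintro M' ⟨-, h2, h3⟩
      funext i j
      by_cases hj : (i, j) ∈ E
      · have hj' : j ∈ rowSet E i := (hmem i j).2 hj
        have hrows : (fun k : rowSet E i => M' i (k : Fin n))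
            = fun k : rowSet E i => M₀ i (k : Fin n) :=
          hinj i (((hiff M' h2).1 h3 i).trans ((hiff M₀ hM₀supp).1 hM₀prod i).symm)
        exact congrFun hrows ⟨j, hj'⟩
      · rw [h2 i j hj, hM₀supp i j hj]
  · intro M h1 h2 h3 i
    refine ⟨⟨fun k : rowSet E i => M₀ i (k : Fin n), hM₀row i, ?_⟩, (hiff M h2).1 h3 i⟩
    intro u hu
    exact hinj i (hu.trans (hM₀row i).symm)
end

section
/- For a positive definite matrix A with sparsity pattern E containing all diagonal pairs, the i-th diagonal entry of the sparse approximate inverse L̂⁻¹ equals the bottom-right entry of A(Eᵢ)⁻¹, i.e., (L̂⁻¹)ᵢᵢ = det(A(Eᵢ \ {i})) / det(A(Eᵢ)); in particular (L̂⁻¹)ᵢᵢ > 0. -/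
open Matrix

lemma posDef_submatrix_of_injective {k m : Type*} [Fintype k] [Fintype m] [DecidableEq k]
    [DecidableEq m] {A : Matrix m m ℝ} (hA : A.PosDef) (f : k → m)
    (hf : Function.Injective f) : (A.submatrix f f).PosDef := by
  refine Matrix.posDef_iff_dotProduct_mulVec.mpr ⟨hA.1.submatrix f, fun x hx => ?_⟩
  set y : m → ℝ := Function.extend f x (0 : m → ℝ) with hy
  have hyf : ∀ t, y (f t) = x t := fun t => hf.extend_apply x (0 : m → ℝ) t
  have hy0 : ∀ j, j ∉ Finset.univ.image f → y j = 0 := by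
    intro j hj
    refine Function.extend_apply' x (0 : m → ℝ) j ?_
    rintro ⟨t, rfl⟩
    exact hj (Finset.mem_image.mpr ⟨t, Finset.mem_univ _, rfl⟩)
  have hyne : y ≠ 0 := fun h => hx (funext fun t => by rw [← hyf t, h]; rfl)
  have hinj : ∀ a ∈ Finset.univ, ∀ b ∈ Finset.univ, f a = f b → a = b :=
    fun a _ b _ h => hf h
  have hAy : ∀ j, (A *ᵥ y) j = ∑ t : k, A j (f t) * x t := by
    intro j
    have h1 : (A *ᵥ y) j = ∑ l : m, A j l * y l := rfl
    have h2 : ∀ l ∈ Finset.univ, l ∉ Finset.univ.image f → A j l * y l = 0 :=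
      fun l _ hl => by rw [hy0 l hl, mul_zero]
    rw [h1, ← Finset.sum_subset (Finset.subset_univ (Finset.univ.image f)) h2,
      Finset.sum_image hinj]
    exact Finset.sum_congr rfl fun t _ => by rw [hyf]
  have key : dotProduct (star x) ((A.submatrix f f) *ᵥ x) = dotProduct (star y) (A *ᵥ y) := by
    simp only [star_trivial]
    have h1 : dotProduct y (A *ᵥ y) = ∑ j : m, y j * (A *ᵥ y) j := rfl
    have h2 : ∀ l ∈ Finset.univ, l ∉ Finset.univ.image f → y l * (A *ᵥ y) l = 0 :=
      fun l _ hl => by rw [hy0 l hl, zero_mul]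
    rw [h1, ← Finset.sum_subset (Finset.subset_univ (Finset.univ.image f)) h2,
      Finset.sum_image hinj]
    refine (Finset.sum_congr rfl fun t _ => ?_).symm
    rw [hyf, hAy]
    rfl
  rw [key]
  exact (Matrix.posDef_iff_dotProduct_mulVec.mp hA).2 hyne

lemma det_updateRow_single_eq_minor {m : Type*} [Fintype m] [DecidableEq m]
    (C : Matrix m m ℝ) (a : m) :
    (C.updateRow a (Pi.single a 1)).det
      = (C.submatrix (fun x : {x : m // x ≠ a} => x.val) (fun x => x.val)).det := by
  classical
  have hU : Unique {x : m // ¬ x ≠ a} :=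
    ⟨⟨⟨a, by simp⟩⟩, fun y => Subtype.ext (not_not.mp y.2)⟩
  let e : {x : m // x ≠ a} ⊕ {x : m // ¬ x ≠ a} ≃ m := Equiv.sumCompl _
  rw [← Matrix.det_submatrix_equiv_self e]
  have hblocks : (C.updateRow a (Pi.single a 1)).submatrix e e =
      Matrix.fromBlocks (C.submatrix (fun x : {x : m // x ≠ a} => x.val) (fun x => x.val))
        (Matrix.of fun (x : {x : m // x ≠ a}) (_ : {x : m // ¬ x ≠ a}) => C x.val a) 0 1 := by
    ext u v
    cases u with
    | inl u =>
      cases v with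
      | inl v => simp [e, Matrix.updateRow_apply, u.2]
      | inr v =>
        have hv : v.val = a := not_not.mp v.2
        simp [e, Matrix.updateRow_apply, u.2, hv]
    | inr u =>
      have hu : u.val = a := not_not.mp u.2
      cases v with
      | inl v =>
        simp [e, hu, Matrix.updateRow_apply, Pi.single_apply, v.2]
      | inr v =>
        have hv : v.val = a := not_not.mp v.2
        have huv : u = v := Subtype.ext (hu.trans hv.symm)
        simp [e, hu, hv, huv, Matrix.updateRow_apply, Pi.single_apply, Matrix.one_apply]
  rw [hblocks, Matrix.det_fromBlocks_zero₂₁, Matrix.det_one, mul_one]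

theorem stmt14 {n : ℕ} (A : Matrix (Fin n) (Fin n) ℝ) (hA : A.PosDef)
    (E : Finset (Fin n × Fin n))
    (hlow : ∀ p ∈ E, p.2 ≤ p.1) (hdiag : ∀ i : Fin n, (i, i) ∈ E)
    (M : Matrix (Fin n) (Fin n) ℝ)
    (hM : ∀ i j : Fin n, (i, j) ∉ E → M i j = 0)
    (hMA : ∀ p ∈ E, (M * A) p.1 p.2 = (1 : Matrix (Fin n) (Fin n) ℝ) p.1 p.2) :
    ∀ i : Fin n,
      M i i = ((psub A ((rowSet E i).erase i)).det / (psub A (rowSet E i)).det)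
      ∧ 0 < M i i := by
  intro i
  classical
  set γ := rowSet E i with hγ
  have hmem : ∀ j : Fin n, j ∈ γ ↔ (i, j) ∈ E := by
    intro j; simp [hγ, rowSet]
  have hiγ : i ∈ γ := (hmem i).mpr (hdiag i)
  set i0 : γ := ⟨i, hiγ⟩ with hi0
  set B := psub A γ with hB
  have hBpd : B.PosDef := posDef_submatrix_of_injective hA _ Subtype.val_injective
  have hminorpd : (psub A (γ.erase i)).PosDef :=
    posDef_submatrix_of_injective hA _ Subtype.val_injective
  have hsym : ∀ j k : Fin n, A j k = A k j := by
    intro j k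
    have := congrFun (congrFun hA.1 j) k
    simpa using this.symm
  -- the key linear system
  have hvec : B *ᵥ (fun k : γ => M i k.val) = Pi.single i0 1 := by
    funext j0
    have hj : (i, (j0 : Fin n)) ∈ E := (hmem _).mp j0.2
    have h1 := hMA (i, (j0 : Fin n)) hj
    have h2 : (B *ᵥ fun k : γ => M i k.val) j0 = ∑ k : γ, M i k.val * A k.val j0.val := by
      have : (B *ᵥ fun k : γ => M i k.val) j0 = ∑ k : γ, A j0.val k.val * M i k.val := rfl
      rw [this]
      exact Finset.sum_congr rfl fun k _ => by rw [hsym, mul_comm]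
    have h3 : ∑ k : γ, M i k.val * A k.val j0.val = (M * A) i j0.val := by
      rw [Matrix.mul_apply]
      have hvan : ∀ k ∈ Finset.univ, k ∉ γ → M i k * A k j0.val = 0 := by
        intro k _ hk
        rw [hM i k (fun h => hk ((hmem k).mpr h)), zero_mul]
      rw [← Finset.sum_subset (Finset.subset_univ γ) hvan]
      exact Finset.sum_coe_sort γ (fun k => M i k * A k j0.val)
    rw [h2, h3, h1]
    by_cases hij : j0 = i0
    · subst hij
      simp [Matrix.one_apply, hi0]
    · have : (i : Fin n) ≠ (j0 : Fin n) := fun h => hij (Subtype.ext h.symm)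
      simp [Matrix.one_apply, this, Pi.single_apply, hij]
  have hdet : IsUnit B.det := hBpd.det_pos.ne'.isUnit
  have hx : (fun k : γ => M i k.val) = B⁻¹ *ᵥ Pi.single i0 1 := by
    rw [← hvec, Matrix.mulVec_mulVec, Matrix.nonsing_inv_mul _ hdet, Matrix.one_mulVec]
  have hMii : M i i = B⁻¹ i0 i0 := by
    have := congrFun hx i0
    rw [this, Matrix.mulVec_single]
    simp
  -- the adjugate entry is the minor determinant
  let e2 : {x : γ // x ≠ i0} ≃ ↥(γ.erase i) :=
    { toFun := fun x => ⟨x.val.val,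
        Finset.mem_erase.mpr ⟨fun h => x.2 (Subtype.ext h), x.val.2⟩⟩
      invFun := fun y => ⟨⟨y.val, (Finset.mem_erase.mp y.2).2⟩,
        fun h => (Finset.mem_erase.mp y.2).1 (congrArg Subtype.val h)⟩
      left_inv := fun x => by ext; rfl
      right_inv := fun y => by ext; rfl }
  have hadj : B.adjugate i0 i0 = (psub A (γ.erase i)).det := by
    rw [Matrix.adjugate_apply, det_updateRow_single_eq_minor B i0]
    rw [← Matrix.det_submatrix_equiv_self e2 (psub A (γ.erase i))]
    refine congrArg Matrix.det ?_
    ext u v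
    rfl
  have hBfin : B⁻¹ i0 i0 = (psub A (γ.erase i)).det / B.det := by
    rw [Matrix.inv_def, Matrix.smul_apply, hadj, Ring.inverse_eq_inv', smul_eq_mul,
      div_eq_inv_mul]
  have hfinal : M i i = (psub A (γ.erase i)).det / B.det := hMii.trans hBfin
  exact ⟨hfinal, hfinal ▸ div_pos hminorpd.det_pos hBpd.det_pos⟩
end
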